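/- Let Br be the Bratteli diagram with Br_0 = {v_0}, two vertices at each level n ≥ 1, exactly one arrow from v_0 to each vertex of level 1, and for n ≥ 1 exactly one 'straight' arrow from each level-n vertex to the level-(n+1) vertex on the same side with potential value 0, and one 'crossing' arrow to the opposite-side vertex with potential value n+1. Then the stochastic matrices \underline{Br(β)}^{(j)} for j ≥ 2 equal [[1/(1+e^{−βj}), e^{−βj}/(1+e^{−βj})],[e^{−βj}/(1+e^{−βj}), 1/(1+e^{−βj})]], the limit matrices \underline{Br}^{(j)} equal the identity for j ≥ 2, and Σ_{j=1}^∞ ‖\underline{Br(β)}^{(j)} − \underline{Br}^{(j)}‖_1 ≤ 2e^{−β}/(1 − e^{−β}) for β > 0; in particular this sum tends to 0 as β → ∞. -/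

import Mathlib

open scoped BigOperators

/-- A Bratteli diagram: finite nonempty level sets `V n`, arrows `E n` from level `n`
to level `n+1`, a single root at level `0`, no sinks, and no sources besides the root. -/
structure Bratteli where
  V : ℕ → Type
  E : ℕ → Type
  instVFin : ∀ n, Fintype (V n)
  instEFin : ∀ n, Fintype (E n)
  instVNe : ∀ n, Nonempty (V n)
  instRoot : Subsingleton (V 0)
  src : ∀ n, E n → V n
  rng : ∀ n, E n → V (n + 1)
  noSink : ∀ n (v : V n), ∃ e : E n, src n e = v
  noSource : ∀ n (v : V (n + 1)), ∃ e : E n, rng n e = v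

attribute [instance] Bratteli.instVFin Bratteli.instEFin Bratteli.instVNe Bratteli.instRoot

/-- Finite paths of length `n` starting at the root. -/
abbrev Bratteli.FinPath (B : Bratteli) (n : ℕ) :=
  { p : ∀ i : Fin n, B.E i.val //
    ∀ (i : ℕ) (h : i + 1 < n),
      B.rng i (p ⟨i, Nat.lt_of_succ_lt h⟩) = B.src (i + 1) (p ⟨i + 1, h⟩) }

/-- Infinite paths starting at the root. -/
structure Bratteli.InfPath (B : Bratteli) where
  arrow : ∀ n, B.E n
  compat : ∀ n, B.rng n (arrow n) = B.src (n + 1) (arrow (n + 1))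

/-- The initial segment `p[1,n]` of an infinite path. -/
def Bratteli.InfPath.take {B : Bratteli} (p : B.InfPath) (n : ℕ) : B.FinPath n :=
  ⟨fun i => p.arrow i.val, fun i _ => p.compat i⟩

/-- The endpoint (range) of a finite path of positive length. -/
def pend {B : Bratteli} {n : ℕ} (μ : B.FinPath (n + 1)) : B.V (n + 1) :=
  B.rng n (μ.1 ⟨n, Nat.lt_succ_self n⟩)

/-- The vertex at level `n` through which a path of length `n+1` passes. -/
def through {B : Bratteli} {n : ℕ} (μ : B.FinPath (n + 1)) : B.V n :=
  B.src n (μ.1 ⟨n, Nat.lt_succ_self n⟩)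

/-- The value `F(μ) = Σ_i F(a_i)` of a potential on a finite path. -/
noncomputable def pathVal {B : Bratteli} (F : ∀ n, B.E n → ℝ) {n : ℕ}
    (μ : B.FinPath n) : ℝ :=
  ∑ i : Fin n, F i.val (μ.1 i)

/-- An infinite path `p` from the root is an `F`-geodesic when for every `n`,
`F(p[1,n]) ≤ F(μ)` for every length-`n` path `μ` from the root with the same endpoint. -/
def IsGeodesic {B : Bratteli} (F : ∀ n, B.E n → ℝ) (p : B.InfPath) : Prop :=
  ∀ (n : ℕ) (μ : B.FinPath (n + 1)), pend μ = pend (p.take (n + 1)) →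
    pathVal F (p.take (n + 1)) ≤ pathVal F μ

open scoped Classical

/-- The left stochastic matrix `Br(β)^{(j)}` with entries
`(Σ_{μ ∈ P^w(v)} e^{−βF(μ)}) / (Σ_{ν ∈ P^w} e^{−βF(ν)})`, over paths of length `j+1`
from the root (so from level `j` to level `j+1` in the diagram). -/
noncomputable def stoch (B : Bratteli) (F : ∀ n, B.E n → ℝ) (β : ℝ) (j : ℕ) :
    Matrix (B.V j) (B.V (j + 1)) ℝ :=
  Matrix.of fun v w =>
    (∑ μ : {μ : B.FinPath (j + 1) // pend μ = w ∧ through μ = v},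
        Real.exp (-(β * pathVal F μ.1))) /
      ∑ μ : {μ : B.FinPath (j + 1) // pend μ = w}, Real.exp (-(β * pathVal F μ.1))

/-- The minimum `m_w` of the potential over paths from the root to `w`. -/
noncomputable def mmin (B : Bratteli) (F : ∀ n, B.E n → ℝ) (j : ℕ) (w : B.V (j + 1)) : ℝ :=
  sInf {x | ∃ μ : B.FinPath (j + 1), pend μ = w ∧ pathVal F μ = x}

/-- The limit matrix `\underline{Br}^{(j)}` with entries
`#{μ ∈ P^w(v) : F(μ) = m_w} / #{μ ∈ P^w : F(μ) = m_w}`. -/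
noncomputable def stochLim (B : Bratteli) (F : ∀ n, B.E n → ℝ) (j : ℕ) :
    Matrix (B.V j) (B.V (j + 1)) ℝ :=
  Matrix.of fun v w =>
    (Nat.card {μ : B.FinPath (j + 1) //
        pend μ = w ∧ through μ = v ∧ pathVal F μ = mmin B F j w} : ℝ) /
      (Nat.card {μ : B.FinPath (j + 1) // pend μ = w ∧ pathVal F μ = mmin B F j w} : ℝ)

/-- The operator norm induced by the `ℓ¹`-norms: the largest `ℓ¹`-norm of a column. -/
noncomputable def l1opNorm {m n : Type} [Fintype m] [Fintype n] (M : Matrix m n ℝ) : ℝ :=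
  ⨆ j : n, ∑ i : m, |M i j|

/-- Levels of the example diagram: one root, two vertices at every positive level. -/
def exV : ℕ → Type
  | 0 => PUnit
  | _ + 1 => Bool

/-- Arrows of the example diagram: one arrow from the root to each level-1 vertex;
from each vertex at level `n ≥ 1`, a straight arrow (`false`) and a crossing arrow
(`true`). -/
def exE : ℕ → Type
  | 0 => Bool
  | _ + 1 => Bool × Bool

def exVFin : ∀ n, Fintype (exV n)
  | 0 => inferInstanceAs (Fintype PUnit)
  | _ + 1 => inferInstanceAs (Fintype Bool)

def exEFin : ∀ n, Fintype (exE n)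
  | 0 => inferInstanceAs (Fintype Bool)
  | _ + 1 => inferInstanceAs (Fintype (Bool × Bool))

def exVNe : ∀ n, Nonempty (exV n)
  | 0 => ⟨PUnit.unit⟩
  | _ + 1 => ⟨true⟩

def exSrc : ∀ n, exE n → exV n
  | 0, _ => PUnit.unit
  | _ + 1, e => e.1

def exRng : ∀ n, exE n → exV (n + 1)
  | 0, b => b
  | _ + 1, e => cond e.2 (!e.1) e.1

/-- The example Bratteli diagram. -/
def exBr : Bratteli where
  V := exV
  E := exE
  instVFin := exVFin
  instEFin := exEFin
  instVNe := exVNe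
  instRoot := inferInstanceAs (Subsingleton PUnit)
  src := exSrc
  rng := exRng
  noSink := by
    intro n v
    cases n with
    | zero => exact ⟨true, rfl⟩
    | succ k => exact ⟨(v, false), rfl⟩
  noSource := by
    intro n v
    cases n with
    | zero => exact ⟨v, rfl⟩
    | succ k => exact ⟨(v, false), rfl⟩

/-- The potential: `0` on the arrows from the root and on straight arrows, and `n+1` on
the crossing arrow emitted from a vertex at level `n ≥ 1`. -/
noncomputable def exF : ∀ n, exBr.E n → ℝ
  | 0, _ => 0
  | k + 1, e => cond e.2 ((k + 2 : ℕ) : ℝ) 0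

/-!
Splitting off the last arrow of a path: for a weight `g` with `g (a + b) = g a * g b`, the sums
`Z(w) = ∑_{μ ∈ P^w} g (F μ)` and `A(v, w) = ∑_{e : v → w} g (F e)` satisfy
`Z(w) = ∑_v Z(v) A(v, w)`, and both stochastic matrices have entries `Z(v) A(v, w) / Z(w)`:
`Br(β)` for `g x = e^{-βx}`, the limit matrix for `g x = [x = 0]` (here `F ≥ 0` and the minimum
`0` is attained by the straight paths). In the example `A(v, w)` is `1` for `v = w` and
`g (j + 1)` otherwise when `v` is at level `j ≥ 1`, so `Z` is constant on each level and the
entries are `g (·) / (1 + g (j + 1))`. The `ℓ¹` distance of the two matrices leaving level `j ≥ 1`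
is then `2e^{-β(j+1)} / (1 + e^{-β(j+1)}) ≤ 2e^{-β(j+1)}`, at level `0` it vanishes, and a
geometric series bounds the sum.
-/

namespace Bratteli.FinPath

variable {B : Bratteli} {n : ℕ}

def last (μ : B.FinPath (n + 1)) : B.E n := μ.1 ⟨n, Nat.lt_succ_self n⟩

def init (μ : B.FinPath (n + 2)) : B.FinPath (n + 1) :=
  ⟨fun i => μ.1 i.castSucc, fun i h => μ.2 i (by omega)⟩

def snoc (μ : B.FinPath (n + 1)) (e : B.E (n + 1)) (h : B.src (n + 1) e = pend μ) :
    B.FinPath (n + 2) :=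
  ⟨Fin.lastCases (motive := fun i => B.E i.val) e (fun i => μ.1 i), fun i hi => by
    have hcast (k : ℕ) (hk : k < n + 1) :
        Fin.lastCases (motive := fun i => B.E i.val) e (fun i => μ.1 i) ⟨k, by omega⟩ =
          μ.1 ⟨k, hk⟩ :=
      Fin.lastCases_castSucc (i := ⟨k, hk⟩)
    rcases Nat.lt_or_ge (i + 1) (n + 1) with hlt | hge
    · rw [hcast i (by omega), hcast (i + 1) hlt]
      exact μ.2 i hlt
    · obtain rfl : i = n := by omega
      have hlast : Fin.lastCases (motive := fun i => B.E i.val) e (fun i => μ.1 i)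
          ⟨i + 1, hi⟩ = e :=
        Fin.lastCases_last
      rw [hcast i (by omega), hlast]
      exact h.symm⟩

@[simp] lemma init_snoc (μ : B.FinPath (n + 1)) (e : B.E (n + 1))
    (h : B.src (n + 1) e = pend μ) : (μ.snoc e h).init = μ := by
  apply Subtype.ext
  funext i
  exact Fin.lastCases_castSucc (motive := fun i => B.E i.val) (i := i)

@[simp] lemma last_snoc (μ : B.FinPath (n + 1)) (e : B.E (n + 1))
    (h : B.src (n + 1) e = pend μ) : (μ.snoc e h).last = e :=
  Fin.lastCases_last (motive := fun i => B.E i.val)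

lemma src_last_eq_pend_init (μ : B.FinPath (n + 2)) : B.src (n + 1) μ.last = pend μ.init :=
  (μ.2 n (by omega)).symm

lemma snoc_init_last (μ : B.FinPath (n + 2)) :
    μ.init.snoc μ.last (src_last_eq_pend_init μ) = μ := by
  apply Subtype.ext
  funext i
  induction i using Fin.lastCases with
  | last => exact Fin.lastCases_last (motive := fun i => B.E i.val)
  | cast i => exact Fin.lastCases_castSucc (motive := fun i => B.E i.val) (i := i)

lemma pend_eq_rng_last (μ : B.FinPath (n + 1)) : pend μ = B.rng n μ.last := rfl

lemma through_eq_src_last (μ : B.FinPath (n + 1)) : through μ = B.src n μ.last := rfl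

lemma pathVal_eq_pathVal_init_add (F : ∀ n, B.E n → ℝ) (μ : B.FinPath (n + 2)) :
    pathVal F μ = pathVal F μ.init + F (n + 1) μ.last := by
  simp only [pathVal, Fin.sum_univ_castSucc]
  rfl

def snocEquiv (v : B.V (n + 1)) (w : B.V (n + 2)) :
    {μ : B.FinPath (n + 2) // pend μ = w ∧ through μ = v} ≃
      {μ : B.FinPath (n + 1) // pend μ = v} ×
        {e : B.E (n + 1) // B.src (n + 1) e = v ∧ B.rng (n + 1) e = w} where
  toFun μ := (⟨μ.1.init, (src_last_eq_pend_init μ.1).symm.trans μ.2.2⟩,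
    ⟨μ.1.last, μ.2.2, μ.2.1⟩)
  invFun p := ⟨p.1.1.snoc p.2.1 (p.2.2.1.trans p.1.2.symm), by
    simp only [pend_eq_rng_last, through_eq_src_last, last_snoc]
    exact ⟨p.2.2.2, p.2.2.1⟩⟩
  left_inv μ := Subtype.ext (snoc_init_last μ.1)
  right_inv p :=
    have h := p.2.2.1.trans p.1.2.symm
    Prod.ext (Subtype.ext (init_snoc _ _ h)) (Subtype.ext (last_snoc _ _ h))

end Bratteli.FinPath

section Weights

variable {B : Bratteli} (F : ∀ n, B.E n → ℝ) (g : ℝ → ℝ) {n : ℕ}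

noncomputable def pathWeight (w : B.V (n + 1)) : ℝ :=
  ∑ μ : {μ : B.FinPath (n + 1) // pend μ = w}, g (pathVal F μ.1)

noncomputable def arrowWeight (v : B.V n) (w : B.V (n + 1)) : ℝ :=
  ∑ e : {e : B.E n // B.src n e = v ∧ B.rng n e = w}, g (F n e)

variable {F g}

lemma sum_pend_through_eq_mul
    (hg : ∀ (μ : B.FinPath (n + 1)) (e : B.E (n + 1)),
      g (pathVal F μ + F (n + 1) e) = g (pathVal F μ) * g (F (n + 1) e))
    (v : B.V (n + 1)) (w : B.V (n + 2)) :
    ∑ μ : {μ : B.FinPath (n + 2) // pend μ = w ∧ through μ = v}, g (pathVal F μ.1) =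
      pathWeight F g v * arrowWeight F g v w := by
  rw [pathWeight, arrowWeight, Finset.sum_mul_sum, ← Fintype.sum_prod_type']
  refine Fintype.sum_equiv (Bratteli.FinPath.snocEquiv v w) _ _ fun μ => ?_
  rw [Bratteli.FinPath.pathVal_eq_pathVal_init_add, hg]
  rfl

lemma pathWeight_succ
    (hg : ∀ (μ : B.FinPath (n + 1)) (e : B.E (n + 1)),
      g (pathVal F μ + F (n + 1) e) = g (pathVal F μ) * g (F (n + 1) e))
    (w : B.V (n + 2)) :
    pathWeight F g w = ∑ v, pathWeight F g v * arrowWeight F g v w := by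
  rw [pathWeight, ← Fintype.sum_fiberwise (fun μ : {μ : B.FinPath (n + 2) // pend μ = w} =>
    through μ.1)]
  refine Fintype.sum_congr _ _ fun v => ?_
  rw [← sum_pend_through_eq_mul hg]
  exact Fintype.sum_equiv (Equiv.subtypeSubtypeEquivSubtypeInter
    (fun μ => pend μ = w) (fun μ => through μ = v)) _ _ fun _ => rfl

lemma arrowWeight_eq_of_forall_iff {v : B.V n} {w : B.V (n + 1)} (e₀ : B.E n)
    (he : ∀ e, B.src n e = v ∧ B.rng n e = w ↔ e = e₀) :
    arrowWeight F g v w = g (F n e₀) :=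
  (Fintype.sum_equiv (Equiv.subtypeEquivRight he) _ (fun e => g (F n e.1)) fun _ => rfl).trans
    (Fintype.sum_unique _)

end Weights

lemma Nat.card_subtype_and_eq_sum_ite {α : Type*} [Fintype α] (p q : α → Prop)
    [DecidablePred p] [DecidablePred q] :
    (Nat.card {x // p x ∧ q x} : ℝ) = ∑ x : {x // p x}, if q x then 1 else 0 := by
  rw [Finset.sum_boole, ← Nat.card_congr (Equiv.subtypeSubtypeEquivSubtypeInter p q),
    Nat.card_eq_fintype_card, Fintype.card_subtype]

lemma pathVal_nonneg {B : Bratteli} {F : ∀ n, B.E n → ℝ} (hF : ∀ n e, 0 ≤ F n e) {n : ℕ}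
    (μ : B.FinPath n) : 0 ≤ pathVal F μ :=
  Finset.sum_nonneg fun _ _ => hF _ _

section Entries

variable {B : Bratteli} {F : ∀ n, B.E n → ℝ} {n : ℕ}

lemma stoch_succ_apply (β : ℝ) (v : B.V (n + 1)) (w : B.V (n + 2)) :
    stoch B F β (n + 1) v w =
      pathWeight F (fun x => Real.exp (-(β * x))) v *
          arrowWeight F (fun x => Real.exp (-(β * x))) v w /
        pathWeight F (fun x => Real.exp (-(β * x))) w := by
  rw [stoch, Matrix.of_apply, sum_pend_through_eq_mul (g := fun x => Real.exp (-(β * x)))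
    (fun _ _ => by rw [← Real.exp_add]; ring_nf)]
  rfl

lemma stochLim_succ_apply (hF : ∀ n e, 0 ≤ F n e) (v : B.V (n + 1)) {w : B.V (n + 2)}
    (hw : mmin B F (n + 1) w = 0) :
    stochLim B F (n + 1) v w =
      pathWeight F (fun x => if x = 0 then 1 else 0) v *
          arrowWeight F (fun x => if x = 0 then 1 else 0) v w /
        pathWeight F (fun x => if x = 0 then 1 else 0) w := by
  have hg (μ : B.FinPath (n + 1)) (e : B.E (n + 1)) :
      (if pathVal F μ + F (n + 1) e = 0 then 1 else 0 : ℝ) =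
        (if pathVal F μ = 0 then 1 else 0) * (if F (n + 1) e = 0 then 1 else 0) := by
    simp only [add_eq_zero_iff_of_nonneg (pathVal_nonneg hF μ) (hF _ e), ite_zero_mul_ite_zero,
      mul_one]
  rw [stochLim, Matrix.of_apply, hw]
  simp only [← and_assoc]
  rw [Nat.card_subtype_and_eq_sum_ite, Nat.card_subtype_and_eq_sum_ite,
    sum_pend_through_eq_mul (g := fun x => if x = 0 then 1 else 0) hg]
  rfl

end Entries

section Minimum

variable {B : Bratteli} {F : ∀ n, B.E n → ℝ}

lemma mmin_take_eq_of_isGeodesic {p : B.InfPath} (hp : IsGeodesic F p) (n : ℕ) :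
    mmin B F n (pend (p.take (n + 1))) = pathVal F (p.take (n + 1)) :=
  IsLeast.csInf_eq ⟨⟨p.take (n + 1), rfl, rfl⟩, by rintro _ ⟨μ, hμ, rfl⟩; exact hp n μ hμ⟩

lemma exists_pathVal_eq_mmin {j : ℕ} {w : B.V (j + 1)}
    (hw : ∃ μ : B.FinPath (j + 1), pend μ = w) :
    ∃ μ : B.FinPath (j + 1), pend μ = w ∧ pathVal F μ = mmin B F j w := by
  obtain ⟨μ, hμ⟩ := hw
  let S := {x | ∃ ν : B.FinPath (j + 1), pend ν = w ∧ pathVal F ν = x}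
  have hS : S.Finite :=
    (Set.finite_range (pathVal F)).subset <| by rintro _ ⟨ν, -, rfl⟩; exact ⟨ν, rfl⟩
  exact Set.Nonempty.csInf_mem (s := S) ⟨pathVal F μ, μ, hμ, rfl⟩ hS

end Minimum

section LevelZero

variable (B : Bratteli) (F : ∀ n, B.E n → ℝ)

lemma exists_finPath_one_pend_eq (w : B.V 1) : ∃ μ : B.FinPath 1, pend μ = w := by
  obtain ⟨e, he⟩ := B.noSource 0 w
  exact ⟨⟨fun | ⟨0, _⟩ => e, fun i h => absurd h (by omega)⟩, he⟩

lemma stoch_zero_apply (β : ℝ) (v : B.V 0) (w : B.V 1) : stoch B F β 0 v w = 1 := by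
  obtain ⟨μ, hμ⟩ := exists_finPath_one_pend_eq B w
  have : Nonempty {μ : B.FinPath 1 // pend μ = w} := ⟨⟨μ, hμ⟩⟩
  rw [stoch, Matrix.of_apply,
    div_eq_one_iff_eq (Finset.sum_pos (fun _ _ => Real.exp_pos _) Finset.univ_nonempty).ne']
  exact Fintype.sum_equiv (Equiv.subtypeEquivRight fun μ =>
    and_iff_left (Subsingleton.elim (through μ) v)) _ _ fun _ => rfl

lemma stochLim_zero_apply (v : B.V 0) (w : B.V 1) : stochLim B F 0 v w = 1 := by
  obtain ⟨μ, hμ⟩ := exists_pathVal_eq_mmin (F := F) (exists_finPath_one_pend_eq B w)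
  have : Nonempty {ν : B.FinPath 1 // pend ν = w ∧ pathVal F ν = mmin B F 0 w} := ⟨⟨μ, hμ⟩⟩
  rw [stochLim, Matrix.of_apply, div_eq_one_iff_eq (Nat.cast_ne_zero.mpr Nat.card_pos.ne')]
  exact congrArg _ (Nat.card_congr (Equiv.subtypeEquivRight fun μ =>
    and_congr_right fun _ => and_iff_right (Subsingleton.elim (through μ) v)))

lemma stoch_zero_eq_stochLim_zero (β : ℝ) : stoch B F β 0 = stochLim B F 0 := by
  ext v w
  rw [stoch_zero_apply, stochLim_zero_apply]

end LevelZero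

section L1OpNorm

variable {m n : Type} [Fintype m] [Fintype n]

lemma l1opNorm_zero : l1opNorm (0 : Matrix m n ℝ) = 0 := by
  simp [l1opNorm]

lemma l1opNorm_nonneg (M : Matrix m n ℝ) : 0 ≤ l1opNorm M :=
  Real.iSup_nonneg fun _ => Finset.sum_nonneg fun _ _ => abs_nonneg _

lemma l1opNorm_eq_of_forall_sum_abs_eq [Nonempty n] {M : Matrix m n ℝ} {c : ℝ}
    (h : ∀ j, ∑ i, |M i j| = c) : l1opNorm M = c := by
  simp only [l1opNorm, h, ciSup_const]

end L1OpNorm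

lemma summable_and_tsum_le_of_le_geometric {f : ℕ → ℝ} {c r : ℝ} (hr0 : 0 ≤ r) (hr1 : r < 1)
    (hf0 : ∀ j, 0 ≤ f j) (hf : ∀ j, f j ≤ c * r ^ j) :
    Summable f ∧ ∑' j, f j ≤ c / (1 - r) := by
  have hg : Summable fun j => c * r ^ j := (summable_geometric_of_lt_one hr0 hr1).mul_left c
  have hsum : Summable f := hg.of_nonneg_of_le hf0 hf
  refine ⟨hsum, (hsum.tsum_le_tsum hf hg).trans_eq ?_⟩
  rw [tsum_mul_left, tsum_geometric_of_lt_one hr0 hr1, div_eq_mul_inv]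

def exStraight (w : Bool) : exBr.InfPath where
  arrow
    | 0 => show Bool from w
    | _ + 1 => show Bool × Bool from (w, false)
  compat n := by cases n <;> rfl

lemma pend_exStraight_take (w : Bool) (n : ℕ) : pend ((exStraight w).take (n + 1)) = w := by
  cases n <;> rfl

lemma pathVal_exStraight_take (w : Bool) (n : ℕ) : pathVal exF ((exStraight w).take n) = 0 :=
  Finset.sum_eq_zero fun i _ => by
    rcases i with ⟨_ | _, _⟩ <;> rfl

lemma exF_nonneg : ∀ n e, 0 ≤ exF n e
  | 0, _ => le_rfl
  | k + 1, e => by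
    change 0 ≤ cond (e : Bool × Bool).2 _ 0
    cases (e : Bool × Bool).2 <;> simp only [cond] <;> positivity

lemma isGeodesic_exStraight (w : Bool) : IsGeodesic exF (exStraight w) := fun n μ _ => by
  rw [pathVal_exStraight_take]
  exact pathVal_nonneg exF_nonneg μ

lemma mmin_exBr (n : ℕ) (w : Bool) : mmin exBr exF n w = 0 := by
  have h := mmin_take_eq_of_isGeodesic (isGeodesic_exStraight w) n
  rwa [pend_exStraight_take, pathVal_exStraight_take] at h

lemma arrowWeight_exBr (g : ℝ → ℝ) (k : ℕ) (v w : Bool) :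
    arrowWeight exF g (n := k + 1) v w = g (if v = w then 0 else ((k + 2 : ℕ) : ℝ)) := by
  refine (arrowWeight_eq_of_forall_iff (show Bool × Bool from (v, v != w)) ?_).trans ?_
  · change ∀ e : Bool × Bool, e.1 = v ∧ cond e.2 (!e.1) e.1 = w ↔ e = (v, v != w)
    cases v <;> cases w <;> decide
  · cases v <;> cases w <;> rfl

lemma pathWeight_exBr_zero (g : ℝ → ℝ) (w : Bool) : pathWeight exF g (n := 0) w = g 0 := by
  have : Subsingleton {μ : exBr.FinPath 1 // pend μ = w} := ⟨by
    rintro ⟨μ, hμ⟩ ⟨ν, hν⟩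
    exact Subtype.ext (Subtype.ext (funext fun ⟨0, _⟩ => hμ.trans hν.symm))⟩
  refine (Fintype.sum_subsingleton _ ⟨(exStraight w).take 1, pend_exStraight_take w 0⟩).trans ?_
  rw [pathVal_exStraight_take]

lemma pathWeight_exBr {g : ℝ → ℝ} (h0 : g 0 = 1)
    (hmul : ∀ x y, 0 ≤ x → 0 ≤ y → g (x + y) = g x * g y) (n : ℕ) (w : Bool) :
    pathWeight exF g (n := n) w = ∏ i ∈ Finset.range n, (1 + g ((i + 2 : ℕ) : ℝ)) := by
  induction n generalizing w with
  | zero => rw [pathWeight_exBr_zero, h0, Finset.prod_range_zero]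
  | succ n ih =>
    refine (pathWeight_succ (fun μ e => hmul _ _ (pathVal_nonneg exF_nonneg μ)
      (exF_nonneg _ e)) w).trans ?_
    change ∑ v : Bool, pathWeight exF g (n := n) v * arrowWeight exF g (n := n + 1) v w = _
    rw [Fintype.sum_bool, ih, ih, arrowWeight_exBr, arrowWeight_exBr, ← mul_add,
      Finset.prod_range_succ]
    congr 1
    cases w <;> simp [h0, add_comm]

lemma pathWeight_mul_arrowWeight_div_exBr {g : ℝ → ℝ} (h0 : g 0 = 1) (hnn : ∀ x, 0 ≤ g x)
    (hmul : ∀ x y, 0 ≤ x → 0 ≤ y → g (x + y) = g x * g y) (k : ℕ) (v w : Bool) :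
    pathWeight exF g (n := k) v * arrowWeight exF g (n := k + 1) v w /
        pathWeight exF g (n := k + 1) w =
      g (if v = w then 0 else ((k + 2 : ℕ) : ℝ)) / (1 + g ((k + 2 : ℕ) : ℝ)) := by
  have hprod : ∏ i ∈ Finset.range k, (1 + g ((i + 2 : ℕ) : ℝ)) ≠ 0 :=
    (Finset.prod_pos fun i _ => by linarith [hnn ((i + 2 : ℕ) : ℝ)]).ne'
  rw [pathWeight_exBr h0 hmul, pathWeight_exBr h0 hmul, arrowWeight_exBr,
    Finset.prod_range_succ, mul_div_mul_left _ _ hprod]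

lemma stoch_exBr (k : ℕ) (β : ℝ) (v w : Bool) :
    stoch exBr exF β (k + 1) v w =
      (if v = w then 1 else Real.exp (-(β * (k + 2)))) / (1 + Real.exp (-(β * (k + 2)))) := by
  have hmul (x y : ℝ) (_ : 0 ≤ x) (_ : 0 ≤ y) :
      Real.exp (-(β * (x + y))) = Real.exp (-(β * x)) * Real.exp (-(β * y)) := by
    rw [← Real.exp_add]; ring_nf
  rw [stoch_succ_apply (B := exBr) (F := exF) (n := k) β v w,
    pathWeight_mul_arrowWeight_div_exBr (by simp) (fun _ => (Real.exp_pos _).le) hmul]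
  split_ifs <;> simp

lemma stochLim_exBr (k : ℕ) (v w : Bool) :
    stochLim exBr exF (k + 1) v w = if v = w then 1 else 0 := by
  have hmul (x y : ℝ) (hx : 0 ≤ x) (hy : 0 ≤ y) :
      (if x + y = 0 then 1 else 0 : ℝ) = (if x = 0 then 1 else 0) * (if y = 0 then 1 else 0) := by
    simp only [add_eq_zero_iff_of_nonneg hx hy, ite_zero_mul_ite_zero, mul_one]
  rw [stochLim_succ_apply (B := exBr) (n := k) exF_nonneg v (mmin_exBr (k + 1) w),
    pathWeight_mul_arrowWeight_div_exBr (by simp) (fun _ => by positivity) hmul]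
  have hk : ((k + 2 : ℕ) : ℝ) ≠ 0 := by positivity
  split_ifs <;> simp_all

lemma l1opNorm_stoch_sub_stochLim_exBr_succ (k : ℕ) (β : ℝ) :
    l1opNorm (stoch exBr exF β (k + 1) - stochLim exBr exF (k + 1)) =
      2 * Real.exp (-(β * (k + 2))) / (1 + Real.exp (-(β * (k + 2)))) := by
  set x := Real.exp (-(β * (k + 2)))
  have hx : 0 < x := Real.exp_pos _
  have habs (v w : Bool) :
      |stoch exBr exF β (k + 1) v w - stochLim exBr exF (k + 1) v w| = x / (1 + x) := by
    rw [stoch_exBr, stochLim_exBr]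
    split_ifs
    · rw [abs_sub_comm, abs_of_nonneg (by rw [sub_nonneg, div_le_one (by positivity)]; linarith)]
      field_simp
      ring
    · rw [sub_zero, abs_of_pos (by positivity)]
  refine l1opNorm_eq_of_forall_sum_abs_eq fun w => ?_
  change ∑ v : Bool, |stoch exBr exF β (k + 1) v w - stochLim exBr exF (k + 1) v w| = _
  rw [Fintype.sum_bool, habs true w, habs false w]
  ring

lemma l1opNorm_stoch_sub_stochLim_exBr_le (β : ℝ) (j : ℕ) :
    l1opNorm (stoch exBr exF β j - stochLim exBr exF j) ≤
      2 * Real.exp (-β) * Real.exp (-β) ^ j := by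
  cases j with
  | zero =>
    rw [stoch_zero_eq_stochLim_zero, sub_self, l1opNorm_zero]
    positivity
  | succ k =>
    have hx : Real.exp (-(β * (k + 2))) = Real.exp (-β) ^ (k + 2) := by
      rw [← Real.exp_nat_mul]; push_cast; ring_nf
    rw [l1opNorm_stoch_sub_stochLim_exBr_succ, hx]
    calc 2 * Real.exp (-β) ^ (k + 2) / (1 + Real.exp (-β) ^ (k + 2))
        ≤ 2 * Real.exp (-β) ^ (k + 2) := div_le_self (by positivity) (le_add_of_nonneg_right (by positivity))
      _ = 2 * Real.exp (-β) * Real.exp (-β) ^ (k + 1) := by ring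

lemma summable_and_tsum_l1opNorm_exBr_le {β : ℝ} (hβ : 0 < β) :
    Summable (fun j => l1opNorm (stoch exBr exF β j - stochLim exBr exF j)) ∧
      ∑' j, l1opNorm (stoch exBr exF β j - stochLim exBr exF j) ≤
        2 * Real.exp (-β) / (1 - Real.exp (-β)) :=
  summable_and_tsum_le_of_le_geometric (Real.exp_pos _).le (Real.exp_lt_one_iff.mpr (by linarith))
    (fun _ => l1opNorm_nonneg _) (l1opNorm_stoch_sub_stochLim_exBr_le β)

/-- For the example diagram: the stochastic matrices are
`[[1/(1+e^{−βj}), e^{−βj}/(1+e^{−βj})],[e^{−βj}/(1+e^{−βj}), 1/(1+e^{−βj})]]`, their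
limits are the identity, and `Σ_j ‖Br(β)^{(j)} − \underline{Br}^{(j)}‖₁ ≤
2e^{−β}/(1−e^{−β})` for `β > 0`, which tends to `0` as `β → ∞`. -/
theorem stmt_19 :
    (∀ (k : ℕ) (β : ℝ) (v w : Bool),
      stoch exBr exF β (k + 1) v w =
        (if v = w then 1 else Real.exp (-(β * (k + 2)))) /
          (1 + Real.exp (-(β * (k + 2))))) ∧
    (∀ (k : ℕ) (v w : Bool),
      stochLim exBr exF (k + 1) v w = if v = w then (1 : ℝ) else 0) ∧
    (∀ β : ℝ, 0 < β →
      Summable (fun j => l1opNorm (stoch exBr exF β j - stochLim exBr exF j)) ∧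
      ∑' j, l1opNorm (stoch exBr exF β j - stochLim exBr exF j) ≤
        2 * Real.exp (-β) / (1 - Real.exp (-β))) ∧
    Filter.Tendsto
      (fun β : ℝ => ∑' j, l1opNorm (stoch exBr exF β j - stochLim exBr exF j))
      Filter.atTop (nhds 0) := by
  refine ⟨stoch_exBr, stochLim_exBr, fun β hβ => summable_and_tsum_l1opNorm_exBr_le hβ, ?_⟩
  have hbound : Filter.Tendsto (fun β : ℝ => 2 * Real.exp (-β) / (1 - Real.exp (-β)))
      Filter.atTop (nhds 0) := by
    have hexp := Real.tendsto_exp_neg_atTop_nhds_zero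
    have h := (hexp.const_mul 2).div (tendsto_const_nhds (x := (1 : ℝ)).sub hexp) (by norm_num)
    rwa [mul_zero, zero_div] at h
  refine tendsto_of_tendsto_of_tendsto_of_le_of_le' tendsto_const_nhds hbound
    (Filter.Eventually.of_forall fun β => tsum_nonneg fun _ => l1opNorm_nonneg _) ?_
  filter_upwards [Filter.eventually_gt_atTop 0] with β hβ
  exact (summable_and_tsum_l1opNorm_exBr_le hβ).2
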